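/- arXiv:2408.08165 — 7 statements merged into one kernel-verified Lean document; each statement's English description precedes it below -/
import Mathlib

section
/- Let A be a finite set, B ⊆ A with |A\B| ≥ 2, and let a, b ∈ A\B be distinct. Then the number of rankings of A in which a is the maximum and b is the minimum of A\B and every element of B lies either above a or below b is |S*(a, B, b)| = (|B|+1)! · (|A\B| − 2)!. -/
open Finset MeasureTheory

variable {α : Type*}

/-- A finite system of best-worst choice probabilities on the ground set `A = univ`:
each `BW B a b` is in `[0,1]` and the best-worst probabilities over each feasible set sum to 1. -/
def IsBWSystem [Fintype α] [DecidableEq α] (BW : Finset α → α → α → ℝ) : Prop :=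
  (∀ B : Finset α, 2 ≤ B.card → ∀ a ∈ B, ∀ b ∈ B, a ≠ b → BW B a b ∈ Set.Icc (0:ℝ) 1) ∧
  ∀ B : Finset α, 2 ≤ B.card → ∑ a ∈ B, ∑ b ∈ B.erase a, BW B a b = 1

/-- The best-worst Block–Marschak polynomial `K_{ab,B} = ∑_{C ⊆ B} (-1)^{|B|-|C|} BW_{A∖C}(a,b)`. -/
def BMK [Fintype α] [DecidableEq α] (BW : Finset α → α → α → ℝ) (a b : α) (B : Finset α) : ℝ :=
  ∑ C ∈ B.powerset, (-1 : ℝ) ^ (B.card - C.card) * BW Cᶜ a b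

/-- A ranking of (all of) `α`: a linear order, encoded as a bijection to `Fin |α|`.
Larger values mean "ranked higher". -/
abbrev Ranking (α : Type*) [Fintype α] := α ≃ Fin (Fintype.card α)

/-- `Sbw D a b` : the set of rankings in which `a` is the maximum and `b` is the minimum of `D`. -/
def Sbw [Fintype α] [DecidableEq α] (D : Finset α) (a b : α) : Finset (Ranking α) :=
  univ.filter fun ρ => (∀ c ∈ D, ρ c ≤ ρ a) ∧ (∀ c ∈ D, ρ b ≤ ρ c)

/-- `SStar B a b` : the set of rankings in which `a` is the maximum and `b` is the minimum of
`Bᶜ = A∖B` and, in addition, every element of `B` is either above `a` or below `b`. -/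
def SStar [Fintype α] [DecidableEq α] (B : Finset α) (a b : α) : Finset (Ranking α) :=
  univ.filter fun ρ =>
    (∀ c ∈ Bᶜ, ρ c ≤ ρ a) ∧ (∀ c ∈ Bᶜ, ρ b ≤ ρ c) ∧ ∀ c ∈ B, ρ a < ρ c ∨ ρ c < ρ b

namespace CardSStarAux

variable [Fintype α] [DecidableEq α]

/-- The "middle" set: elements of `A∖B` other than `a` and `b`. -/
abbrev Mid (B : Finset α) (a b : α) : Finset α := (Bᶜ.erase a).erase b

lemma mem_mid (B : Finset α) (a b : α) {c : α} (h1 : c ∉ insert a B) (h2 : c ≠ b) :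
    c ∈ Mid B a b := by
  simp only [mem_insert, not_or] at h1
  simp [Mid, mem_erase, mem_compl, h1.1, h1.2, h2]

section Build

variable (B : Finset α) (a b : α)
  (σ : {x // x ∈ insert a B} ≃ Fin (B.card + 1))
  (τ : {x // x ∈ Mid B a b} ≃ Fin (Bᶜ.card - 2))

/-- Reconstruct a ranking (as a ℕ-valued function) from a linear order `σ` on `insert a B`
and a linear order `τ` on the middle. -/
def bFun (c : α) : ℕ :=
  if h : c ∈ insert a B then
    if (σ ⟨c, h⟩ : ℕ) < (σ ⟨a, mem_insert_self a B⟩ : ℕ) then (σ ⟨c, h⟩ : ℕ)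
    else (σ ⟨c, h⟩ : ℕ) + (Bᶜ.card - 1)
  else if hcb : c = b then (σ ⟨a, mem_insert_self a B⟩ : ℕ)
  else (σ ⟨a, mem_insert_self a B⟩ : ℕ) + 1 + (τ ⟨c, mem_mid B a b h hcb⟩ : ℕ)

lemma bFun_lt (hm : 2 ≤ Bᶜ.card) (c : α) : bFun B a b σ τ c < Fintype.card α := by
  have hn := Finset.card_add_card_compl B
  have h2 := (σ ⟨a, mem_insert_self a B⟩).isLt
  by_cases h : c ∈ insert a B
  · simp only [bFun, dif_pos h]
    have h1 := (σ ⟨c, h⟩).isLt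
    split_ifs <;> omega
  · simp only [bFun, dif_neg h]
    split_ifs with hcb
    · omega
    · have h3 := (τ ⟨c, mem_mid B a b h hcb⟩).isLt
      omega

lemma bFun_injective (hm : 2 ≤ Bᶜ.card) (ha : a ∉ B) (hb : b ∉ B) (hab : a ≠ b) :
    Function.Injective (bFun B a b σ τ) := by
  intro c d hcd
  by_cases hc : c ∈ insert a B <;> by_cases hd : d ∈ insert a B
  · simp only [bFun, dif_pos hc, dif_pos hd] at hcd
    have h1 := (σ ⟨c, hc⟩).isLt
    have h2 := (σ ⟨d, hd⟩).isLt
    have goal : (σ ⟨c, hc⟩ : ℕ) = (σ ⟨d, hd⟩ : ℕ) → c = d := fun h =>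
      congrArg Subtype.val (σ.injective (Fin.ext h))
    split_ifs at hcd with k1 k2 k2
    · exact goal (by omega)
    · omega
    · omega
    · exact goal (by omega)
  · simp only [bFun, dif_pos hc, dif_neg hd] at hcd
    exfalso
    split_ifs at hcd with k1 k2 k2
    · omega
    · have h3 := (τ ⟨d, mem_mid B a b hd k2⟩).isLt
      omega
    · omega
    · have h3 := (τ ⟨d, mem_mid B a b hd k2⟩).isLt
      omega
  · simp only [bFun, dif_neg hc, dif_pos hd] at hcd
    exfalso
    split_ifs at hcd with k1 k2 k2
    · omega
    · omega
    · have h3 := (τ ⟨c, mem_mid B a b hc k1⟩).isLt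
      omega
    · have h3 := (τ ⟨c, mem_mid B a b hc k1⟩).isLt
      omega
  · simp only [bFun, dif_neg hc, dif_neg hd] at hcd
    split_ifs at hcd with k1 k2 k2
    · exact k1.trans k2.symm
    · exfalso
      have h3 := (τ ⟨d, mem_mid B a b hd k2⟩).isLt
      omega
    · exfalso
      have h3 := (τ ⟨c, mem_mid B a b hc k1⟩).isLt
      omega
    · have h : (τ ⟨c, mem_mid B a b hc k1⟩ : ℕ) = (τ ⟨d, mem_mid B a b hd k2⟩ : ℕ) := by omega
      exact congrArg Subtype.val (τ.injective (Fin.ext h))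

lemma notMem_insert_of (hb : b ∉ B) (hab : b ≠ a) : b ∉ insert a B := by
  simp [mem_insert, hb, hab]

lemma bFun_of_mem {c : α} (hc : c ∈ insert a B) :
    bFun B a b σ τ c =
      if (σ ⟨c, hc⟩ : ℕ) < (σ ⟨a, mem_insert_self a B⟩ : ℕ) then (σ ⟨c, hc⟩ : ℕ)
      else (σ ⟨c, hc⟩ : ℕ) + (Bᶜ.card - 1) := by
  simp only [bFun, dif_pos hc]

lemma bFun_of_b (hb : b ∉ B) (hab : b ≠ a) :
    bFun B a b σ τ b = (σ ⟨a, mem_insert_self a B⟩ : ℕ) := by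
  simp only [bFun, dif_neg (notMem_insert_of B a b hb hab)]
  simp

lemma bFun_of_mid {c : α} (hc : c ∈ Mid B a b) :
    bFun B a b σ τ c
      = (σ ⟨a, mem_insert_self a B⟩ : ℕ) + 1 + (τ ⟨c, hc⟩ : ℕ) := by
  have h0 := hc
  simp only [Mid, mem_erase, mem_compl] at h0
  have h1 : c ∉ insert a B := by simp [mem_insert, h0.2.1, h0.2.2]
  simp only [bFun, dif_neg h1, dif_neg h0.1]

lemma sigma_a_ne {c : α} (hc : c ∈ insert a B) (hca : c ≠ a) :
    (σ ⟨c, hc⟩ : ℕ) ≠ (σ ⟨a, mem_insert_self a B⟩ : ℕ) := fun h =>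
  hca (congrArg Subtype.val (σ.injective (Fin.ext h)))

/-- The ranking associated to a pair of linear orders on `insert a B` and on the middle. -/
noncomputable def build (hm : 2 ≤ Bᶜ.card) (ha : a ∉ B) (hb : b ∉ B) (hab : a ≠ b) :
    Ranking α :=
  Equiv.ofBijective
    (fun c => (⟨bFun B a b σ τ c, bFun_lt B a b σ τ hm c⟩ : Fin (Fintype.card α)))
    ((Fintype.bijective_iff_injective_and_card _).mpr
      ⟨fun c d h => bFun_injective B a b σ τ hm ha hb hab (by
          simpa using congrArg Fin.val h),
        by simp⟩)

lemma build_val (hm : 2 ≤ Bᶜ.card) (ha : a ∉ B) (hb : b ∉ B) (hab : a ≠ b) (c : α) :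
    (build B a b σ τ hm ha hb hab c : ℕ) = bFun B a b σ τ c := rfl

lemma build_mem (hm : 2 ≤ Bᶜ.card) (ha : a ∉ B) (hb : b ∉ B) (hab : a ≠ b) :
    build B a b σ τ hm ha hb hab ∈ SStar B a b := by
  set ρ := build B a b σ τ hm ha hb hab with hρ
  have hval : ∀ c, (ρ c : ℕ) = bFun B a b σ τ c := fun c => rfl
  set j := (σ ⟨a, mem_insert_self a B⟩ : ℕ) with hj
  have hfa : bFun B a b σ τ a = j + (Bᶜ.card - 1) := by
    rw [bFun_of_mem B a b σ τ (mem_insert_self a B), if_neg (lt_irrefl j)]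
  have hfb : bFun B a b σ τ b = j := bFun_of_b B a b σ τ hb (Ne.symm hab)
  have hcompl : ∀ c ∈ Bᶜ, j ≤ bFun B a b σ τ c ∧ bFun B a b σ τ c ≤ j + (Bᶜ.card - 1) := by
    intro c hc
    rcases eq_or_ne c a with rfl | hca
    · rw [hfa]; omega
    rcases eq_or_ne c b with rfl | hcb
    · rw [hfb]; omega
    have hmid : c ∈ Mid B a b := by
      simp only [Mid, mem_erase]; exact ⟨hcb, hca, hc⟩
    rw [bFun_of_mid B a b σ τ hmid]
    have := (τ ⟨c, hmid⟩).isLt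
    omega
  simp only [SStar, mem_filter, mem_univ, true_and]
  refine ⟨fun c hc => ?_, fun c hc => ?_, fun c hc => ?_⟩
  · rw [Fin.le_def]
    have := hcompl c hc
    simp only [hval, hfa]
    omega
  · rw [Fin.le_def]
    have := hcompl c hc
    simp only [hval, hfb]
    omega
  · have hcB : c ∈ insert a B := mem_insert_of_mem hc
    have hca : c ≠ a := fun h => ha (h ▸ hc)
    have hne := sigma_a_ne B a σ hcB hca
    simp only [Fin.lt_def, hval, hfa, hfb, bFun_of_mem B a b σ τ hcB]
    rw [← hj]
    split_ifs with h
    · right; exact h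
    · left; omega

lemma build_inj (hm : 2 ≤ Bᶜ.card) (ha : a ∉ B) (hb : b ∉ B) (hab : a ≠ b)
    (σ' : {x // x ∈ insert a B} ≃ Fin (B.card + 1))
    (τ' : {x // x ∈ Mid B a b} ≃ Fin (Bᶜ.card - 2))
    (h : build B a b σ τ hm ha hb hab = build B a b σ' τ' hm ha hb hab) :
    σ = σ' ∧ τ = τ' := by
  have hpt : ∀ c, bFun B a b σ τ c = bFun B a b σ' τ' c := fun c =>
    congrArg (fun e : Ranking α => (e c : ℕ)) h
  set j := (σ ⟨a, mem_insert_self a B⟩ : ℕ) with hj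
  set j' := (σ' ⟨a, mem_insert_self a B⟩ : ℕ) with hj'
  have hjj : j = j' := by
    have := hpt b
    rwa [bFun_of_b B a b σ τ hb (Ne.symm hab), bFun_of_b B a b σ' τ' hb (Ne.symm hab)] at this
  constructor
  · refine Equiv.ext fun x => ?_
    obtain ⟨c, hc⟩ := x
    have h1 := hpt c
    rw [bFun_of_mem B a b σ τ hc, bFun_of_mem B a b σ' τ' hc, ← hj, ← hj', ← hjj] at h1
    refine Fin.ext ?_
    split_ifs at h1 with k1 k2 k2 <;> omega
  · refine Equiv.ext fun x => ?_
    obtain ⟨c, hc⟩ := x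
    have h1 := hpt c
    rw [bFun_of_mid B a b σ τ hc, bFun_of_mid B a b σ' τ' hc, ← hj, ← hj', ← hjj] at h1
    refine Fin.ext ?_
    omega

end Build

section Surj

variable (B : Finset α) (a b : α)

lemma top_eq (ρ : Ranking α) (ha : a ∈ Bᶜ) (hb : b ∈ Bᶜ)
    (h1 : ∀ c ∈ Bᶜ, ρ c ≤ ρ a) (h2 : ∀ c ∈ Bᶜ, ρ b ≤ ρ c)
    (h3 : ∀ c ∈ B, ρ a < ρ c ∨ ρ c < ρ b) :
    (ρ a : ℕ) + 1 = (ρ b : ℕ) + Bᶜ.card := by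
  have hba : (ρ b : ℕ) ≤ (ρ a : ℕ) := h2 a ha
  have hset : Bᶜ = univ.filter fun c => ρ b ≤ ρ c ∧ ρ c ≤ ρ a := by
    ext c
    simp only [mem_filter, mem_univ, true_and, mem_compl]
    constructor
    · intro h
      exact ⟨h2 c (mem_compl.mpr h), h1 c (mem_compl.mpr h)⟩
    · intro h hc
      rcases h3 c hc with h' | h'
      · exact absurd h.2 (not_le.mpr h')
      · exact absurd h.1 (not_le.mpr h')
  have himg : (univ.filter fun c => ρ b ≤ ρ c ∧ ρ c ≤ ρ a).image ρ
      = (univ : Finset (Fin (Fintype.card α))).filter fun x => ρ b ≤ x ∧ x ≤ ρ a := by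
    ext x
    simp only [mem_image, mem_filter, mem_univ, true_and]
    constructor
    · rintro ⟨c, hc, rfl⟩; exact hc
    · intro hx; exact ⟨ρ.symm x, by simpa using hx⟩
  have hIcc : ((univ : Finset (Fin (Fintype.card α))).filter fun x => ρ b ≤ x ∧ x ≤ ρ a)
      = Finset.Icc (ρ b) (ρ a) := by
    ext x
    simp [Finset.mem_Icc]
  have hcard : Bᶜ.card = (ρ a : ℕ) + 1 - (ρ b : ℕ) := by
    rw [hset, ← Finset.card_image_of_injective _ ρ.injective, himg, hIcc, Fin.card_Icc]
  omega

lemma exists_build (hm : 2 ≤ Bᶜ.card) (ha : a ∈ Bᶜ) (hb : b ∈ Bᶜ) (hab : a ≠ b)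
    (ρ : Ranking α) (hρ : ρ ∈ SStar B a b) :
    ∃ (σ : {x // x ∈ insert a B} ≃ Fin (B.card + 1))
      (τ : {x // x ∈ Mid B a b} ≃ Fin (Bᶜ.card - 2)),
      build B a b σ τ hm (mem_compl.mp ha) (mem_compl.mp hb) hab = ρ := by
  have ha' : a ∉ B := mem_compl.mp ha
  have hb' : b ∉ B := mem_compl.mp hb
  simp only [SStar, mem_filter, mem_univ, true_and] at hρ
  obtain ⟨h1, h2, h3⟩ := hρ
  set j := (ρ b : ℕ) with hjdef
  set A := (ρ a : ℕ) with hAdef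
  have hA : A + 1 = j + Bᶜ.card := top_eq B a b ρ ha hb h1 h2 h3
  have hn := Finset.card_add_card_compl B
  have hAlt : A < Fintype.card α := (ρ a).isLt
  have hjk : j ≤ B.card := by omega
  -- value of ρ on elements of B
  have hBval : ∀ c ∈ B, (ρ c : ℕ) < j ∨ j + Bᶜ.card ≤ (ρ c : ℕ) := by
    intro c hc
    rcases h3 c hc with h | h
    · right; rw [Fin.lt_def] at h; omega
    · left; rw [Fin.lt_def] at h; omega
  have hBcval : ∀ c ∈ Bᶜ, j ≤ (ρ c : ℕ) ∧ (ρ c : ℕ) ≤ A := fun c hc =>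
    ⟨h2 c hc, h1 c hc⟩
  -- σ₀
  have hσbound : ∀ x : {x // x ∈ insert a B},
      (if x.1 = a then j else if (ρ x.1 : ℕ) < j then (ρ x.1 : ℕ)
        else (ρ x.1 : ℕ) - (Bᶜ.card - 1)) < B.card + 1 := by
    rintro ⟨c, hc⟩
    dsimp only
    split_ifs with hca hlt
    · omega
    · omega
    · have hcB : c ∈ B := (mem_insert.mp hc).resolve_left hca
      have := hBval c hcB
      have := (ρ c).isLt
      omega
  set g : {x // x ∈ insert a B} → Fin (B.card + 1) := fun x =>
    ⟨if x.1 = a then j else if (ρ x.1 : ℕ) < j then (ρ x.1 : ℕ)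
      else (ρ x.1 : ℕ) - (Bᶜ.card - 1), hσbound x⟩ with hgdef
  have hginj : Function.Injective g := by
    rintro ⟨c, hc⟩ ⟨d, hd⟩ hcd
    have hval := congrArg Fin.val hcd
    simp only [hgdef] at hval
    have hρcd : (ρ c : ℕ) = (ρ d : ℕ) → c = d := fun h => ρ.injective (Fin.ext h)
    refine Subtype.ext ?_
    by_cases hca : c = a <;> by_cases hda : d = a
    · exact hca.trans hda.symm
    · have hdB : d ∈ B := (mem_insert.mp hd).resolve_left hda
      have hdv := hBval d hdB
      have hdlt := (ρ d).isLt
      rw [if_pos hca, if_neg hda] at hval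
      exfalso
      split_ifs at hval <;> omega
    · have hcB : c ∈ B := (mem_insert.mp hc).resolve_left hca
      have hcv := hBval c hcB
      have hclt := (ρ c).isLt
      rw [if_neg hca, if_pos hda] at hval
      exfalso
      split_ifs at hval <;> omega
    · have hcB : c ∈ B := (mem_insert.mp hc).resolve_left hca
      have hdB : d ∈ B := (mem_insert.mp hd).resolve_left hda
      have hcv := hBval c hcB
      have hdv := hBval d hdB
      have hclt := (ρ c).isLt
      have hdlt := (ρ d).isLt
      rw [if_neg hca, if_neg hda] at hval
      refine hρcd ?_
      split_ifs at hval <;> omega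
  have hcard1 : Fintype.card {x // x ∈ insert a B} = Fintype.card (Fin (B.card + 1)) := by
    rw [Fintype.card_coe, Fintype.card_fin, card_insert_of_notMem ha']
  set σ0 : {x // x ∈ insert a B} ≃ Fin (B.card + 1) :=
    Equiv.ofBijective g ((Fintype.bijective_iff_injective_and_card g).mpr ⟨hginj, hcard1⟩)
    with hσ0
  have hmidval : ∀ c ∈ Mid B a b, j + 1 ≤ (ρ c : ℕ) ∧ (ρ c : ℕ) + 1 ≤ A := by
    intro c hcm
    simp only [Mid, mem_erase] at hcm
    obtain ⟨hcb, hca, hcC⟩ := hcm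
    have := hBcval c hcC
    have hne1 : (ρ c : ℕ) ≠ j := fun h => hcb (ρ.injective (Fin.ext h))
    have hne2 : (ρ c : ℕ) ≠ A := fun h => hca (ρ.injective (Fin.ext h))
    omega
  have hτbound : ∀ x : {x // x ∈ Mid B a b}, (ρ x.1 : ℕ) - (j + 1) < Bᶜ.card - 2 := by
    rintro ⟨c, hcm⟩
    show (ρ c : ℕ) - (j + 1) < Bᶜ.card - 2
    have := hmidval c hcm
    omega
  set g2 : {x // x ∈ Mid B a b} → Fin (Bᶜ.card - 2) := fun x =>
    ⟨(ρ x.1 : ℕ) - (j + 1), hτbound x⟩ with hg2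
  have hg2inj : Function.Injective g2 := by
    rintro ⟨c, hc⟩ ⟨d, hd⟩ hcd
    have hval := congrArg Fin.val hcd
    have hval' : (ρ c : ℕ) - (j + 1) = (ρ d : ℕ) - (j + 1) := hval
    have := hmidval c hc
    have := hmidval d hd
    exact Subtype.ext (ρ.injective (Fin.ext (show (ρ c : ℕ) = (ρ d : ℕ) by omega)))
  have hbmem : b ∈ Bᶜ.erase a := mem_erase.mpr ⟨Ne.symm hab, hb⟩
  have hcard2 : Fintype.card {x // x ∈ Mid B a b} = Fintype.card (Fin (Bᶜ.card - 2)) := by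
    rw [Fintype.card_coe, Fintype.card_fin, Mid, card_erase_of_mem hbmem,
      card_erase_of_mem ha]
    omega
  set τ0 : {x // x ∈ Mid B a b} ≃ Fin (Bᶜ.card - 2) :=
    Equiv.ofBijective g2 ((Fintype.bijective_iff_injective_and_card g2).mpr ⟨hg2inj, hcard2⟩)
    with hτ0
  have hσ0a : (σ0 ⟨a, mem_insert_self a B⟩ : ℕ) = j := by
    show (g ⟨a, mem_insert_self a B⟩ : ℕ) = j
    simp [hgdef]
  refine ⟨σ0, τ0, ?_⟩
  refine Equiv.ext fun c => Fin.ext ?_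
  rw [build_val]
  by_cases hc : c ∈ insert a B
  · rw [bFun_of_mem B a b σ0 τ0 hc, hσ0a]
    have hgc : (σ0 ⟨c, hc⟩ : ℕ) = if c = a then j else if (ρ c : ℕ) < j then (ρ c : ℕ)
        else (ρ c : ℕ) - (Bᶜ.card - 1) := rfl
    by_cases hca : c = a
    · subst hca
      rw [hgc, if_pos rfl, if_neg (lt_irrefl j)]
      omega
    · have hcB : c ∈ B := (mem_insert.mp hc).resolve_left hca
      have hcv := hBval c hcB
      have hclt := (ρ c).isLt
      rw [hgc, if_neg hca]
      split_ifs <;> omega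
  · by_cases hcb : c = b
    · rw [hcb, bFun_of_b B a b σ0 τ0 hb' (Ne.symm hab), hσ0a]
    · have hcm : c ∈ Mid B a b := mem_mid B a b hc hcb
      rw [bFun_of_mid B a b σ0 τ0 hcm, hσ0a]
      have hτc : (τ0 ⟨c, hcm⟩ : ℕ) = (ρ c : ℕ) - (j + 1) := rfl
      rw [hτc]
      have := hmidval c hcm
      omega

end Surj

end CardSStarAux

open CardSStarAux

/-- Lemma (counting): `|S*(a, B, b)| = (|B|+1)! ⬝ (|A∖B|−2)!` for `B ⊆ A` with `|A∖B| ≥ 2`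
and distinct `a, b ∈ A∖B`. -/
theorem card_SStar [Fintype α] [DecidableEq α]
    (B : Finset α) (hBc : 2 ≤ Bᶜ.card)
    (a : α) (ha : a ∈ Bᶜ) (b : α) (hb : b ∈ Bᶜ) (hab : a ≠ b) :
    (SStar B a b).card = (B.card + 1).factorial * (Bᶜ.card - 2).factorial := by
  classical
  have ha' : a ∉ B := mem_compl.mp ha
  have hb' : b ∉ B := mem_compl.mp hb
  have key : ((univ : Finset (({x // x ∈ insert a B} ≃ Fin (B.card + 1)) ×
      ({x // x ∈ Mid B a b} ≃ Fin (Bᶜ.card - 2))))).card = (SStar B a b).card := by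
    refine Finset.card_bij (fun p _ => build B a b p.1 p.2 hBc ha' hb' hab) ?_ ?_ ?_
    · intro p _
      exact build_mem B a b p.1 p.2 hBc ha' hb' hab
    · intro p _ q _ h
      obtain ⟨h1, h2⟩ := build_inj B a b p.1 p.2 hBc ha' hb' hab q.1 q.2 h
      exact Prod.ext h1 h2
    · intro ρ hρ
      obtain ⟨σ, τ, hστ⟩ := exists_build B a b hBc ha hb hab ρ hρ
      exact ⟨(σ, τ), mem_univ _, hστ⟩
  have hmid : (Mid B a b).card = Bᶜ.card - 2 := by
    rw [Mid, card_erase_of_mem (mem_erase.mpr ⟨Ne.symm hab, hb⟩), card_erase_of_mem ha]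
    omega
  have e1 : {x // x ∈ insert a B} ≃ Fin (B.card + 1) :=
    Fintype.equivFinOfCardEq (by rw [Fintype.card_coe,
      card_insert_of_notMem ha'])
  have e2 : {x // x ∈ Mid B a b} ≃ Fin (Bᶜ.card - 2) :=
    Fintype.equivFinOfCardEq (by rw [Fintype.card_coe, hmid])
  rw [← key, card_univ, Fintype.card_prod, Fintype.card_equiv e1, Fintype.card_equiv e2,
    Fintype.card_coe, Fintype.card_coe, card_insert_of_notMem ha', hmid]
end

section
/- Let A be a finite set with |A| ≥ 2 and let i, j ∈ A be distinct. Then the set Π_A of all rankings of A is the disjoint union, over all subsets B ⊆ A\{i,j}, of the sets S*(i, B, j) and S*(j, B, i); that is, every ranking ρ of A lies in exactly one of the sets S*(i, B, j), S*(j, B, i) for exactly one B ⊆ A\{i,j}. -/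
open Finset MeasureTheory

variable {α : Type*}

lemma mem_SStar_iff_aux [Fintype α] [DecidableEq α] (ρ : Ranking α) (a b : α)
    (hab : a ≠ b) (B : Finset α) (hB : B ⊆ ({a, b} : Finset α)ᶜ) :
    ρ ∈ SStar B a b ↔
      ρ b < ρ a ∧ B = univ.filter fun c => ρ a < ρ c ∨ ρ c < ρ b := by
  constructor
  · rintro h
    rw [SStar, mem_filter] at h
    obtain ⟨-, h1, h2, h3⟩ := h
    have hbB : b ∉ B := fun hb => by simpa using hB hb
    have haB : a ∉ B := fun ha => by simpa using hB ha
    have hba : ρ b < ρ a := by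
      have := h1 b (by simpa using hbB)
      exact lt_of_le_of_ne this (fun e => hab (ρ.injective e.symm))
    refine ⟨hba, ?_⟩
    ext c
    simp only [mem_filter, mem_univ, true_and]
    constructor
    · exact h3 c
    · intro hc
      by_contra hcB
      have h1' := h1 c (by simpa using hcB)
      have h2' := h2 c (by simpa using hcB)
      rcases hc with hc | hc
      · exact absurd h1' (not_le.mpr hc)
      · exact absurd h2' (not_le.mpr hc)
  · rintro ⟨hba, rfl⟩
    rw [SStar, mem_filter]
    refine ⟨mem_univ _, ?_, ?_, ?_⟩
    · intro c hc
      rw [mem_compl, mem_filter] at hc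
      push_neg at hc
      exact (hc (mem_univ c)).1
    · intro c hc
      rw [mem_compl, mem_filter] at hc
      push_neg at hc
      exact (hc (mem_univ c)).2
    · intro c hc
      exact (mem_filter.mp hc).2

/-- Lemma: `Π_A` is the disjoint union over `B ⊆ A∖{i,j}` of `S*(i,B,j)` and `S*(j,B,i)`:
every ranking lies in exactly one of these sets, for exactly one `B`. The pair
`(B, which of the two sets)` is encoded as an element of `Finset α × Bool`. -/
theorem rankings_disjoint_union_SStar [Fintype α] [DecidableEq α]
    (hA : 2 ≤ Fintype.card α) (i j : α) (hij : i ≠ j) (ρ : Ranking α) :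
    ∃! p : Finset α × Bool, p.1 ⊆ ({i, j} : Finset α)ᶜ ∧
      ρ ∈ (if p.2 then SStar p.1 i j else SStar p.1 j i) := by
  have hne : ρ i ≠ ρ j := fun h => hij (ρ.injective h)
  rcases hne.lt_or_gt with hlt | hgt
  · -- ρ i < ρ j : j is top, use bool false
    refine ⟨⟨univ.filter fun c => ρ j < ρ c ∨ ρ c < ρ i, false⟩, ⟨?_, ?_⟩, ?_⟩
    · intro c hc
      simp only [mem_filter, mem_univ, true_and] at hc
      simp only [mem_compl, mem_insert, mem_singleton]
      rintro (rfl | rfl)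
      · rcases hc with h | h
        · exact absurd (hlt.trans h) (lt_irrefl _)
        · exact absurd h (lt_irrefl _)
      · rcases hc with h | h
        · exact absurd h (lt_irrefl _)
        · exact absurd (h.trans hlt) (lt_irrefl _)
    · simp only [if_neg Bool.false_ne_true]
      exact (mem_SStar_iff_aux ρ j i hij.symm _ (by
        intro c hc
        simp only [mem_filter, mem_univ, true_and] at hc
        simp only [mem_compl, mem_insert, mem_singleton]
        rintro (rfl | rfl)
        · rcases hc with h | h
          · exact absurd h (lt_irrefl _)
          · exact absurd (h.trans hlt) (lt_irrefl _)
        · rcases hc with h | h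
          · exact absurd (hlt.trans h) (lt_irrefl _)
          · exact absurd h (lt_irrefl _))).mpr ⟨hlt, rfl⟩
    · rintro ⟨B, b⟩ ⟨hB, hmem⟩
      cases b
      · simp only [if_neg Bool.false_ne_true] at hmem
        have hB' : B ⊆ ({j, i} : Finset α)ᶜ := by rwa [pair_comm]
        obtain ⟨-, rfl⟩ := (mem_SStar_iff_aux ρ j i hij.symm B hB').mp hmem
        rfl
      · simp only [if_pos rfl] at hmem
        obtain ⟨h, -⟩ := (mem_SStar_iff_aux ρ i j hij B hB).mp hmem
        exact absurd (h.trans hlt) (lt_irrefl _)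
  · -- ρ j < ρ i : i is top, use bool true
    refine ⟨⟨univ.filter fun c => ρ i < ρ c ∨ ρ c < ρ j, true⟩, ⟨?_, ?_⟩, ?_⟩
    · intro c hc
      simp only [mem_filter, mem_univ, true_and] at hc
      simp only [mem_compl, mem_insert, mem_singleton]
      rintro (rfl | rfl)
      · rcases hc with h | h
        · exact absurd h (lt_irrefl _)
        · exact absurd (h.trans hgt) (lt_irrefl _)
      · rcases hc with h | h
        · exact absurd (hgt.trans h) (lt_irrefl _)
        · exact absurd h (lt_irrefl _)
    · simp only [if_pos rfl]
      exact (mem_SStar_iff_aux ρ i j hij _ (by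
        intro c hc
        simp only [mem_filter, mem_univ, true_and] at hc
        simp only [mem_compl, mem_insert, mem_singleton]
        rintro (rfl | rfl)
        · rcases hc with h | h
          · exact absurd h (lt_irrefl _)
          · exact absurd (h.trans hgt) (lt_irrefl _)
        · rcases hc with h | h
          · exact absurd (hgt.trans h) (lt_irrefl _)
          · exact absurd h (lt_irrefl _))).mpr ⟨hgt, rfl⟩
    · rintro ⟨B, b⟩ ⟨hB, hmem⟩
      cases b
      · simp only [if_neg Bool.false_ne_true] at hmem
        have hB' : B ⊆ ({j, i} : Finset α)ᶜ := by rwa [pair_comm]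
        obtain ⟨h, -⟩ := (mem_SStar_iff_aux ρ j i hij.symm B hB').mp hmem
        exact absurd (h.trans hgt) (lt_irrefl _)
      · simp only [if_pos rfl] at hmem
        obtain ⟨-, rfl⟩ := (mem_SStar_iff_aux ρ i j hij B hB).mp hmem
        rfl
end

section
/- Let A be a finite set with |A| ≥ 2 and let i, j ∈ A be distinct. Then Σ_{B ⊆ A\{i,j}} ( |S*(i, B, j)| + |S*(j, B, i)| ) = |A|!, where the sum ranges over all subsets B of A\{i,j}. -/
open Finset MeasureTheory

variable {α : Type*}

/-!
A ranking `ρ` with `b` below `a` lies in `S*(a, B, b)` for exactly one `B ⊆ A ∖ {a, b}`, namely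
the set of elements ranked outside the interval `[ρ b, ρ a]`; rankings with `a` below `b` lie in
none. Hence the `B`-sum of `|S*(a, B, b)|` counts the rankings with `b` below `a`, and adding the
symmetric sum counts every ranking once.
-/

section

variable [Fintype α]

def rankedOutside (ρ : Ranking α) (a b : α) : Finset α :=
  {c | ρ a < ρ c ∨ ρ c < ρ b}

lemma mem_rankedOutside {ρ : Ranking α} {a b c : α} :
    c ∈ rankedOutside ρ a b ↔ ρ a < ρ c ∨ ρ c < ρ b := by
  simp [rankedOutside]

lemma rankedOutside_subset_compl_pair [DecidableEq α] {ρ : Ranking α} {a b : α} (h : ρ b ≤ ρ a) :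
    rankedOutside ρ a b ⊆ ({a, b} : Finset α)ᶜ := by
  intro c hc
  simp only [mem_rankedOutside] at hc
  simp only [mem_compl, mem_insert, mem_singleton]
  rintro (rfl | rfl) <;> omega

lemma mem_SStar_iff [DecidableEq α] {B : Finset α} {a b : α} (hab : a ≠ b)
    (hB : B ⊆ ({a, b} : Finset α)ᶜ) (ρ : Ranking α) :
    ρ ∈ SStar B a b ↔ ρ b < ρ a ∧ rankedOutside ρ a b = B := by
  have haB : a ∉ B := fun h => by simpa using hB h
  simp only [SStar, mem_filter, mem_univ, true_and, mem_compl, Finset.ext_iff, mem_rankedOutside]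
  constructor
  · rintro ⟨hmax, hmin, hout⟩
    refine ⟨(hmin a haB).lt_of_ne fun h => hab (ρ.injective h.symm), fun c => ⟨?_, hout c⟩⟩
    intro hc
    by_contra hcB
    have := hmax c hcB
    have := hmin c hcB
    omega
  · rintro ⟨-, hout⟩
    refine ⟨fun c hc => ?_, fun c hc => ?_, fun c hc => (hout c).2 hc⟩ <;>
    · have := mt (hout c).1 hc
      omega

lemma sum_card_SStar_eq_card_lt [DecidableEq α] {a b : α} (hab : a ≠ b) :
    ∑ B ∈ (({a, b} : Finset α)ᶜ).powerset, #(SStar B a b) = #{ρ : Ranking α | ρ b < ρ a} := by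
  rw [card_eq_sum_card_fiberwise (f := fun ρ => rankedOutside ρ a b)
    (t := (({a, b} : Finset α)ᶜ).powerset)]
  · refine sum_congr rfl fun B hB => congrArg card ?_
    ext ρ
    simp only [mem_SStar_iff hab (mem_powerset.1 hB), mem_filter, mem_univ, true_and]
  · intro ρ hρ
    exact mem_powerset.2 <| rankedOutside_subset_compl_pair (mem_filter.1 hρ).2.le

lemma card_lt_add_card_gt [DecidableEq α] {a b : α} (hab : a ≠ b) :
    #{ρ : Ranking α | ρ b < ρ a} + #{ρ : Ranking α | ρ a < ρ b} = (Fintype.card α).factorial := by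
  have hflip : #{ρ : Ranking α | ρ a < ρ b} = #{ρ : Ranking α | ¬ ρ b < ρ a} :=
    congrArg card <| filter_congr fun ρ _ => by
      have := ρ.injective.ne hab
      omega
  rw [hflip, card_filter_add_card_filter_not, card_univ, Fintype.card_equiv (Fintype.equivFin α)]

end

theorem sum_card_SStar_general [Fintype α] [DecidableEq α]
    (i j : α) (hij : i ≠ j) :
    ∑ B ∈ (({i, j} : Finset α)ᶜ).powerset, ((SStar B i j).card + (SStar B j i).card)
      = (Fintype.card α).factorial := by
  rw [sum_add_distrib, sum_card_SStar_eq_card_lt hij, pair_comm,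
    sum_card_SStar_eq_card_lt hij.symm, card_lt_add_card_gt hij]

/-- `∑_{B ⊆ A∖{i,j}} (|S*(i,B,j)| + |S*(j,B,i)|) = |A|!` for distinct `i, j ∈ A`. -/
theorem sum_card_SStar [Fintype α] [DecidableEq α]
    (hA : 2 ≤ Fintype.card α) (i j : α) (hij : i ≠ j) :
    ∑ B ∈ (({i, j} : Finset α)ᶜ).powerset, ((SStar B i j).card + (SStar B j i).card)
      = (Fintype.card α).factorial :=
  sum_card_SStar_general i j hij
end

section
/- Let (A, BWP) be a finite system of best-worst choice probabilities. Then the following are equivalent: (1) there exist real-valued random variables (U_x)_{x ∈ A} on a common probability space whose values are almost surely pairwise distinct, such that for every B ⊆ A with |B| ≥ 2 and all distinct a, b ∈ B, BW_B(a,b) equals the probability that U_a > U_c for all c ∈ B\{a} and U_c > U_b for all c ∈ B\{b}; (2) there exists a probability measure P on the (finite) set Π_A of rankings of A such that for every B ⊆ A with |B| ≥ 2 and all distinct a, b ∈ B, BW_B(a,b) = P(S(a, B, b)). -/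
open Finset MeasureTheory

variable {α : Type*}

/-- The ranking of `α` induced by an injective real-valued utility function. -/
noncomputable def rankOf [Fintype α] (f : α → ℝ) (hf : Function.Injective f) : Ranking α :=
  letI := LinearOrder.lift' f hf
  (monoEquivOfFin α rfl).symm.toEquiv

lemma rankOf_lt_iff [Fintype α] (f : α → ℝ) (hf : Function.Injective f) (x y : α) :
    rankOf f hf x < rankOf f hf y ↔ f x < f y := by
  letI := LinearOrder.lift' f hf
  have h : rankOf f hf x < rankOf f hf y ↔ x < y :=
    (monoEquivOfFin α (k := Fintype.card α) rfl).symm.lt_iff_lt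
  exact h.trans Iff.rfl

lemma ranking_eq_of_lt_iff [Fintype α] (ρ σ : Ranking α)
    (h : ∀ x y, ρ x < ρ y ↔ σ x < σ y) : ρ = σ := by
  let e : Fin (Fintype.card α) ≃o Fin (Fintype.card α) :=
    { toEquiv := ρ.symm.trans σ
      map_rel_iff' := by
        intro i j
        simp only [Equiv.trans_apply]
        rw [← not_lt, ← not_lt, not_iff_not, ← h, Equiv.apply_symm_apply,
          Equiv.apply_symm_apply] }
  have he : ∀ i, e i = i := fun i => Fin.ext (Fin.coe_orderIso_apply e i)
  ext x
  have h3 : e (ρ x) = σ x := by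
    show (ρ.symm.trans σ) (ρ x) = σ x
    simp
  rw [← h3, he (ρ x)]

/-- Lemma (Block–Marschak-type equivalence): a finite system of best-worst choice probabilities
admits a random utility representation iff there is a probability measure on the finite set of
rankings `Π_A` giving each `BW_B(a,b)` as the probability of `S(a,B,b)`. -/
theorem bw_random_utility_iff_ranking_measure [Fintype α] [DecidableEq α]
    (BW : Finset α → α → α → ℝ) (hA : 2 ≤ Fintype.card α) (hsys : IsBWSystem BW) :
    (∃ (Ω : Type) (_ : MeasurableSpace Ω) (μ : Measure Ω), IsProbabilityMeasure μ ∧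
      ∃ U : α → Ω → ℝ, (∀ x : α, Measurable (U x)) ∧
        (∀ x y : α, x ≠ y → μ {ω | U x ω = U y ω} = 0) ∧
        ∀ B : Finset α, 2 ≤ B.card → ∀ a ∈ B, ∀ b ∈ B, a ≠ b →
          BW B a b =
            (μ {ω | (∀ c ∈ B, c ≠ a → U c ω < U a ω) ∧ ∀ c ∈ B, c ≠ b → U b ω < U c ω}).toReal)
    ↔
    (∃ P : Ranking α → ℝ, (∀ ρ : Ranking α, 0 ≤ P ρ) ∧ (∑ ρ : Ranking α, P ρ) = 1 ∧
      ∀ B : Finset α, 2 ≤ B.card → ∀ a ∈ B, ∀ b ∈ B, a ≠ b →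
        BW B a b = ∑ ρ ∈ Sbw B a b, P ρ) := by
  classical
  constructor
  · rintro ⟨Ω, m, μ, hprob, U, hMeas, hTies, hRep⟩
    set D : Set Ω := ⋃ (x : α), ⋃ (y : α), ⋃ (_ : x ≠ y), {ω | U x ω = U y ω} with hD
    have hDnull : μ D = 0 :=
      measure_iUnion_null fun x => measure_iUnion_null fun y =>
        measure_iUnion_null fun hxy => hTies x y hxy
    have hDmem : ∀ ω, ω ∉ D → Function.Injective fun x => U x ω := by
      intro ω hω x y hxy
      by_contra hne
      exact hω (Set.mem_iUnion.2 ⟨x, Set.mem_iUnion.2 ⟨y, Set.mem_iUnion.2 ⟨hne, hxy⟩⟩⟩)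
    set E : Ranking α → Set Ω := fun ρ => {ω | ∀ x y, ρ x < ρ y → U x ω < U y ω} with hE
    have hEmeas : ∀ ρ, MeasurableSet (E ρ) := by
      intro ρ
      have h : E ρ = ⋂ (x : α), ⋂ (y : α), ⋂ (_ : ρ x < ρ y), {ω | U x ω < U y ω} := by
        ext ω; simp [hE, Set.mem_iInter]
      rw [h]
      exact MeasurableSet.iInter fun x => MeasurableSet.iInter fun y =>
        MeasurableSet.iInter fun _ => measurableSet_lt (hMeas x) (hMeas y)
    have hEiff : ∀ ρ ω, ω ∈ E ρ → ∀ x y, ρ x < ρ y ↔ U x ω < U y ω := by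
      intro ρ ω hω x y
      refine ⟨hω x y, fun hU => ?_⟩
      by_contra hlt
      rcases eq_or_ne x y with rfl | hxy
      · exact lt_irrefl _ hU
      · have h2 : ρ y < ρ x := by
          rcases lt_trichotomy (ρ x) (ρ y) with h | h | h
          · exact absurd h hlt
          · exact absurd (ρ.injective h) hxy
          · exact h
        exact absurd (hω y x h2) (not_lt.2 hU.le)
    have hpd : Set.PairwiseDisjoint (Set.univ : Set (Ranking α)) E := by
      intro ρ _ σ _ hne
      rw [Function.onFun, Set.disjoint_left]
      intro ω hρ hσ
      exact hne (ranking_eq_of_lt_iff ρ σ fun x y =>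
        (hEiff ρ ω hρ x y).trans (hEiff σ ω hσ x y).symm)
    have hcover : ∀ ω, ω ∉ D → ∃ ρ, ω ∈ E ρ := fun ω hω =>
      ⟨rankOf _ (hDmem ω hω), fun x y h => (rankOf_lt_iff _ _ x y).1 h⟩
    have hsum : ∀ s : Finset (Ranking α), μ (⋃ ρ ∈ s, E ρ) = ∑ ρ ∈ s, μ (E ρ) := fun s =>
      measure_biUnion_finset (hpd.subset (Set.subset_univ _)) (fun ρ _ => hEmeas ρ)
    have key : ∀ (s : Finset (Ranking α)) (T : Set Ω), (⋃ ρ ∈ s, E ρ) ⊆ T →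
        T ⊆ (⋃ ρ ∈ s, E ρ) ∪ D → μ T = ∑ ρ ∈ s, μ (E ρ) := by
      intro s T h1 h2
      rw [← hsum s]
      refine le_antisymm ?_ (measure_mono h1)
      calc μ T ≤ μ ((⋃ ρ ∈ s, E ρ) ∪ D) := measure_mono h2
        _ ≤ μ (⋃ ρ ∈ s, E ρ) + μ D := measure_union_le _ _
        _ = μ (⋃ ρ ∈ s, E ρ) := by rw [hDnull, add_zero]
    refine ⟨fun ρ => (μ (E ρ)).toReal, fun ρ => ENNReal.toReal_nonneg, ?_, ?_⟩
    · have h1 : μ Set.univ = ∑ ρ : Ranking α, μ (E ρ) := by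
        refine key univ Set.univ (Set.subset_univ _) (fun ω _ => ?_)
        by_cases hω : ω ∈ D
        · exact Or.inr hω
        · obtain ⟨ρ, hρ⟩ := hcover ω hω
          exact Or.inl (Set.mem_biUnion (mem_univ ρ) hρ)
      rw [← ENNReal.toReal_sum (fun ρ _ => (measure_lt_top μ _).ne), ← h1, measure_univ,
        ENNReal.toReal_one]
    · intro B hB a ha b hb hab
      rw [hRep B hB a ha b hb hab]
      have hT : μ {ω | (∀ c ∈ B, c ≠ a → U c ω < U a ω) ∧ ∀ c ∈ B, c ≠ b → U b ω < U c ω}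
          = ∑ ρ ∈ Sbw B a b, μ (E ρ) := by
        refine key (Sbw B a b) _ ?_ ?_
        · intro ω hω
          simp only [Set.mem_iUnion] at hω
          obtain ⟨ρ, hρs, hωρ⟩ := hω
          simp only [Sbw, mem_filter, mem_univ, true_and] at hρs
          obtain ⟨hmax, hmin⟩ := hρs
          constructor
          · intro c hc hca
            exact hωρ c a (lt_of_le_of_ne (hmax c hc) (fun h => hca (ρ.injective h)))
          · intro c hc hcb
            exact hωρ b c (lt_of_le_of_ne (hmin c hc) (fun h => hcb (ρ.injective h).symm))
        · intro ω hω
          by_cases hωD : ω ∈ D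
          · exact Or.inr hωD
          left
          set ρ := rankOf _ (hDmem ω hωD) with hρ
          have hmem : ω ∈ E ρ := fun x y h => (rankOf_lt_iff _ _ x y).1 h
          obtain ⟨hmax, hmin⟩ := hω
          have hρmem : ρ ∈ Sbw B a b := by
            rw [Sbw, Finset.mem_filter]
            refine ⟨mem_univ _, fun c hc => ?_, fun c hc => ?_⟩
            · rcases eq_or_ne c a with rfl | hca
              · exact le_refl _
              · exact le_of_lt ((rankOf_lt_iff _ _ c a).2 (hmax c hc hca))
            · rcases eq_or_ne c b with rfl | hcb
              · exact le_refl _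
              · exact le_of_lt ((rankOf_lt_iff _ _ b c).2 (hmin c hc hcb))
          exact Set.mem_biUnion hρmem hmem
      rw [hT, ENNReal.toReal_sum (fun ρ _ => (measure_lt_top μ _).ne)]
  · rintro ⟨P, hP0, hP1, hPrep⟩
    set N := Fintype.card (Ranking α) with hN
    set e : Ranking α ≃ Fin N := Fintype.equivFin (Ranking α) with he
    set Q : Fin N → ℝ := fun i => P (e.symm i) with hQ
    letI m : MeasurableSpace (Fin N) := ⊤
    haveI : MeasurableSingletonClass (Fin N) :=
      ⟨fun _ => MeasurableSpace.measurableSet_top⟩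
    set μ : Measure (Fin N) := ∑ i : Fin N, (ENNReal.ofReal (Q i)) • Measure.dirac i with hμ
    have happly : ∀ s : Finset (Fin N),
        μ (↑s : Set (Fin N)) = ∑ i ∈ s, ENNReal.ofReal (Q i) := by
      intro s
      rw [hμ, Measure.finset_sum_apply]
      simp only [Measure.smul_apply, smul_eq_mul, Measure.dirac_apply, Set.indicator_apply,
        Finset.mem_coe, Pi.one_apply, mul_ite, mul_one, mul_zero]
      rw [Finset.sum_ite_mem, Finset.univ_inter]
    have htotal : μ Set.univ = 1 := by
      rw [← Finset.coe_univ, happly, ← ENNReal.ofReal_sum_of_nonneg (fun i _ => hP0 _)]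
      rw [show (∑ i : Fin N, Q i) = ∑ ρ : Ranking α, P ρ from Equiv.sum_comp e.symm P, hP1,
        ENNReal.ofReal_one]
    refine ⟨Fin N, m, μ, ⟨htotal⟩, fun x ω => (((e.symm ω) x : ℕ) : ℝ),
      fun x s _ => MeasurableSpace.measurableSet_top, ?_, ?_⟩
    · intro x y hxy
      have h : {ω : Fin N | (((e.symm ω) x : ℕ) : ℝ) = (((e.symm ω) y : ℕ) : ℝ)} = ∅ := by
        ext ω
        simp only [Set.mem_setOf_eq, Set.mem_empty_iff_false, iff_false]
        intro h
        exact hxy ((e.symm ω).injective (Fin.ext (Nat.cast_injective h)))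
      rw [h, measure_empty]
    · intro B hB a ha b hb hab
      have hset : {ω : Fin N |
          (∀ c ∈ B, c ≠ a → (((e.symm ω) c : ℕ) : ℝ) < (((e.symm ω) a : ℕ) : ℝ)) ∧
          ∀ c ∈ B, c ≠ b → (((e.symm ω) b : ℕ) : ℝ) < (((e.symm ω) c : ℕ) : ℝ)}
          = (↑((Sbw B a b).map e.toEmbedding) : Set (Fin N)) := by
        ext ω
        set ρ := e.symm ω with hρ
        rw [Finset.mem_coe, Finset.mem_map_equiv]
        simp only [Set.mem_setOf_eq, Sbw, mem_filter, mem_univ, true_and, Nat.cast_lt, ← hρ]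
        constructor
        · rintro ⟨h1, h2⟩
          refine ⟨fun c hc => ?_, fun c hc => ?_⟩
          · rcases eq_or_ne c a with rfl | hca
            · exact le_refl _
            · exact le_of_lt (h1 c hc hca)
          · rcases eq_or_ne c b with rfl | hcb
            · exact le_refl _
            · exact le_of_lt (h2 c hc hcb)
        · rintro ⟨h1, h2⟩
          refine ⟨fun c hc hca => ?_, fun c hc hcb => ?_⟩
          · exact lt_of_le_of_ne (h1 c hc) (fun h => hca (ρ.injective (Fin.ext h)))
          · exact lt_of_le_of_ne (h2 c hc) (fun h => hcb (ρ.injective (Fin.ext h)).symm)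
      rw [hset, happly, Finset.sum_map, ENNReal.toReal_sum (fun ρ _ => ENNReal.ofReal_ne_top),
        hPrep B hB a ha b hb hab]
      refine Finset.sum_congr rfl fun ρ _ => ?_
      rw [show (e.toEmbedding ρ) = e ρ from rfl]
      rw [show Q (e ρ) = P ρ by rw [hQ]; simp, ENNReal.toReal_ofReal (hP0 ρ)]
end

section
/- Let (A, BWP) be a finite system of best-worst choice probabilities with |A| = 4. Suppose w : Π_A → ℝ is a function such that for every B ⊆ A with |B| ≤ 2, all distinct a, b ∈ A\B, and every ranking ρ ∈ S*(a, B, b), one has w(ρ) = K_{ab,B} / ((|B|+1)! · (2−|B|)!). Then Σ_{ρ ∈ Π_A} w(ρ) = 1. -/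
open Finset MeasureTheory

variable {α : Type*}

lemma perm_count : ∀ i j : Fin 4, i ≠ j →
    (univ.filter fun σ : Equiv.Perm (Fin 4) => σ.symm 3 = i ∧ σ.symm 0 = j).card = 2 := by
  decide

/-- For `|A| = 4`: if `w : Π_A → ℝ` takes the value `K_{ab,B} / ((|B|+1)! (2−|B|)!)` on every
ranking in `S*(a, B, b)` (for all `B ⊆ A` with `|B| ≤ 2` and distinct `a, b ∈ A∖B`), then the
total weight of all rankings is `1`. -/
theorem sum_weights_eq_one [Fintype α] [DecidableEq α]
    (BW : Finset α → α → α → ℝ) (h4 : Fintype.card α = 4) (hsys : IsBWSystem BW)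
    (w : Ranking α → ℝ)
    (hw : ∀ B : Finset α, B.card ≤ 2 → ∀ a ∈ Bᶜ, ∀ b ∈ Bᶜ, a ≠ b →
      ∀ ρ ∈ SStar B a b,
        w ρ = BMK BW a b B / ((B.card + 1).factorial * (2 - B.card).factorial : ℝ)) :
    ∑ ρ : Ranking α, w ρ = 1 := by
  classical
  set k : Fin (Fintype.card α) ≃ Fin 4 := finCongr h4 with hk
  set top : Fin (Fintype.card α) := k.symm 3 with htop
  set bot : Fin (Fintype.card α) := k.symm 0 with hbot
  obtain ⟨e⟩ : Nonempty (α ≃ Fin 4) := ⟨Fintype.equivFinOfCardEq h4⟩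
  have htopv : (top : Fin (Fintype.card α)).val = 3 := by simp [htop, hk]
  have hbotv : (bot : Fin (Fintype.card α)).val = 0 := by simp [hbot, hk]
  have htb : top ≠ bot := by
    intro h; rw [h] at htopv; omega
  have hmax : ∀ x : Fin (Fintype.card α), x ≤ top := by
    intro x; rw [Fin.le_def, htopv]; have := x.isLt; omega
  have hmin : ∀ x : Fin (Fintype.card α), bot ≤ x := by
    intro x; rw [Fin.le_def, hbotv]; omega
  set φ : Ranking α → α × α := fun ρ => (ρ.symm top, ρ.symm bot) with hφ
  have key : ∀ p : α × α, ∑ ρ ∈ univ.filter (fun ρ : Ranking α => φ ρ = p), w ρ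
      = if p.1 = p.2 then 0 else BW Finset.univ p.1 p.2 := by
    rintro ⟨a, b⟩
    by_cases hab : a = b
    · simp only [hab, if_pos rfl]
      have : univ.filter (fun ρ : Ranking α => φ ρ = (b, b)) = ∅ := by
        ext ρ
        simp only [mem_filter, mem_univ, true_and, notMem_empty, iff_false, hφ,
          Prod.mk.injEq]
        rintro ⟨h1, h2⟩
        exact htb (ρ.symm.injective (h1.trans h2.symm))
      rw [this, Finset.sum_empty]
      simp
    · simp only [if_neg hab]
      have hval : ∀ ρ ∈ univ.filter (fun ρ : Ranking α => φ ρ = (a, b)),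
          w ρ = BW Finset.univ a b / 2 := by
        intro ρ hρ
        simp only [mem_filter, mem_univ, true_and, hφ, Prod.mk.injEq] at hρ
        have hρa : ρ a = top := by rw [← hρ.1, Equiv.apply_symm_apply]
        have hρb : ρ b = bot := by rw [← hρ.2, Equiv.apply_symm_apply]
        have hmem : ρ ∈ SStar (∅ : Finset α) a b := by
          simp only [SStar, mem_filter, mem_univ, true_and, compl_empty, notMem_empty]
          exact ⟨fun c _ => hρa ▸ hmax _, fun c _ => hρb ▸ hmin _, fun c hc => absurd hc (by simp)⟩
        have := hw ∅ (by simp) a (by simp) b (by simp) hab ρ hmem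
        rw [this]
        have : BMK BW a b (∅ : Finset α) = BW Finset.univ a b := by
          simp [BMK]
        rw [this]
        norm_num
      rw [Finset.sum_congr rfl hval, Finset.sum_const]
      have hc : (univ.filter (fun ρ : Ranking α => φ ρ = (a, b))).card = 2 := by
        rw [← perm_count (e a) (e b) (fun h => hab (e.injective h))]
        apply Finset.card_bij' (fun ρ _ => e.symm.trans (ρ.trans k))
          (fun σ _ => e.trans (σ.trans k.symm))
        · intro ρ hρ
          simp only [mem_filter, mem_univ, true_and, hφ, Prod.mk.injEq] at hρ ⊢
          constructor
          · show e (ρ.symm (k.symm 3)) = e a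
            rw [← htop, hρ.1]
          · show e (ρ.symm (k.symm 0)) = e b
            rw [← hbot, hρ.2]
        · intro σ hσ
          simp only [mem_filter, mem_univ, true_and, hφ, Prod.mk.injEq] at hσ ⊢
          constructor
          · show e.symm (σ.symm (k (k.symm 3))) = a
            rw [Equiv.apply_symm_apply, hσ.1, Equiv.symm_apply_apply]
          · show e.symm (σ.symm (k (k.symm 0))) = b
            rw [Equiv.apply_symm_apply, hσ.2, Equiv.symm_apply_apply]
        · intro ρ _; ext x; simp
        · intro σ _; ext x; simp
      rw [hc]
      ring
  have hfib : ∑ ρ : Ranking α, w ρ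
      = ∑ p : α × α, ∑ ρ ∈ univ.filter (fun ρ : Ranking α => φ ρ = p), w ρ := by
    rw [Finset.sum_fiberwise_of_maps_to (fun ρ _ => mem_univ (φ ρ)) w]
  rw [hfib]
  have := hsys.2 Finset.univ (by rw [Finset.card_univ, h4]; omega)
  calc ∑ p : α × α, ∑ ρ ∈ univ.filter (fun ρ : Ranking α => φ ρ = p), w ρ
      = ∑ p : α × α, if p.1 = p.2 then 0 else BW Finset.univ p.1 p.2 := by
        exact Finset.sum_congr rfl fun p _ => key p
    _ = ∑ a : α, ∑ b : α, if a = b then 0 else BW Finset.univ a b := by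
        rw [Fintype.sum_prod_type]
    _ = ∑ a : α, ∑ b ∈ univ.erase a, BW Finset.univ a b := by
        refine Finset.sum_congr rfl fun a _ => ?_
        rw [← Finset.filter_ne' univ a, Finset.sum_filter]
        refine Finset.sum_congr rfl fun b _ => ?_
        by_cases h : a = b
        · simp [h]
        · simp [h, Ne.symm h]
    _ = 1 := this
end

section
/- Let A be a finite set, B ⊆ A with |A\B| ≥ 2, and let a, b ∈ A\B be distinct. For C ⊆ B, the set S*(a, C, b) decomposes as a disjoint union indexed by ordered pairs (s₁, s₂) of disjoint sequences whose underlying sets partition C: a ranking ρ ∈ S*(a, C, b) corresponds to exactly one such pair, namely s₁ lists (in ρ-decreasing order) the elements of C above a and s₂ lists (in ρ-decreasing order) the elements of C below b; moreover, for each such pair (s₁, s₂) the corresponding cell has exactly (|A\C| − 2)! rankings. -/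
/-!
Read downwards, a ranking in `S*(a, C, b)` meets the elements of `C` above `a`, then `a`, then the
band `A ∖ C ∖ {a, b}` in some order, then `b`, then the elements of `C` below `b`. So `(s₁, s₂)` are
the strictly sorted lists of these two sets, unique because a strictly sorted list is determined by
its entries. All rankings in the cell of `(s₁, s₂)` order the spine `s₁ ++ a :: b :: s₂` alike and
put the band at the same height; as the rank of an element is the number of elements below it,
they agree on the spine. Conversely, a ranking agreeing with a member of the cell on the spine is in
the cell. The cell is thus a coset of the permutations of the band, which has `|A ∖ C| - 2`
elements.
-/

open Finset MeasureTheory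

variable {α : Type*}

namespace List

variable {β γ : Type*} [LinearOrder β] [LinearOrder γ] {f : α → β} {l l₁ l₂ : List α}

theorem IsChain.pairwise_comp_gt (h : l.IsChain (fun x y => f y < f x)) :
    l.Pairwise (fun x y => f y < f x) :=
  have : Trans (fun x y => f y < f x) (fun x y => f y < f x) (fun x y => f y < f x) :=
    ⟨fun hxy hyz => hyz.trans hxy⟩
  h.pairwise

theorem Pairwise.nodup_of_comp_gt (h : l.Pairwise (fun x y => f y < f x)) : l.Nodup :=
  h.imp fun hxy hxy' => hxy.ne' (congrArg f hxy')

theorem eq_of_pairwise_comp_gt_of_toFinset_eq [DecidableEq α]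
    (h₁ : l₁.Pairwise (fun x y => f y < f x)) (h₂ : l₂.Pairwise (fun x y => f y < f x))
    (h : l₁.toFinset = l₂.toFinset) : l₁ = l₂ :=
  have : Std.Irrefl (fun x y => f y < f x) := ⟨fun x => lt_irrefl (f x)⟩
  h₁.eq_of_mem_iff h₂ fun x => by rw [← mem_toFinset, h, mem_toFinset]

theorem mem_iff_of_toFinset_eq_filter [DecidableEq α] {s : Finset α} {p : α → Prop}
    [DecidablePred p] (h : l.toFinset = s.filter p) {x : α} : x ∈ l ↔ x ∈ s ∧ p x := by
  rw [← mem_toFinset, h, Finset.mem_filter]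

theorem Pairwise.lt_iff_lt_of_pairwise {g : α → γ} (hf : l.Pairwise (fun x y => f y < f x))
    (hg : l.Pairwise (fun x y => g y < g x)) {x y : α} (hx : x ∈ l) (hy : y ∈ l) :
    f x < f y ↔ g x < g y := by
  obtain rfl | hxy := eq_or_ne x y
  · simp
  let R x y := (f y < f x ∧ g y < g x) ∨ (f x < f y ∧ g x < g y)
  have : Std.Symm R := ⟨fun _ _ h => h.symm⟩
  have hR : l.Pairwise R := (hf.and hg).imp Or.inl
  rcases hR.forall hx hy hxy with h | h
  · exact iff_of_false h.1.asymm h.2.asymm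
  · exact iff_of_true h.1 h.2

theorem Nodup.exists_equiv_fin_pairwise_gt [Fintype α] {L : List α} (hnd : L.Nodup)
    (hL : ∀ x, x ∈ L) : ∃ ρ : α ≃ Fin (Fintype.card α), L.Pairwise (fun x y => ρ y < ρ x) := by
  classical
  let e := Nodup.getEquivOfForallMemList L.reverse (nodup_reverse.mpr hnd) (by simpa using hL)
  refine ⟨e.symm.trans (finCongr (by simpa using Fintype.card_congr e)), ?_⟩
  rw [← pairwise_reverse, pairwise_iff_getElem]
  intro i j hi hj hij
  have hi' : e.symm L.reverse[i] = ⟨i, hi⟩ := e.symm_apply_eq.mpr rfl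
  have hj' : e.symm L.reverse[j] = ⟨j, hj⟩ := e.symm_apply_eq.mpr rfl
  simp only [Equiv.trans_apply, hi', hj', finCongr_apply]
  exact hij

end List

theorem Finset.exists_list_pairwise_comp_gt {β : Type*} [DecidableEq α] [LinearOrder β]
    {f : α → β} (hf : f.Injective) (s : Finset α) :
    ∃ l : List α, l.toFinset = s ∧ l.Pairwise (fun x y => f y < f x) := by
  induction s using Finset.induction_on_max_value f with
  | empty => exact ⟨[], rfl, .nil⟩
  | insert a s ha hmax ih =>
    obtain ⟨l, rfl, hl⟩ := ih
    refine ⟨a :: l, by simp, .cons (fun y hy => ?_) hl⟩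
    have hy' : y ∈ l.toFinset := List.mem_toFinset.mpr hy
    exact (hmax y hy').lt_of_ne fun h => ha (hf h ▸ hy')

namespace Equiv

variable {n : ℕ}

theorem symm_apply_notMem_of_eqOn {β : Type*} {ρ ρ₀ : α ≃ β} {s : Set α}
    (h : ∀ x ∈ s, ρ x = ρ₀ x) {y : α} (hy : y ∉ s) : ρ₀.symm (ρ y) ∉ s := fun hs => by
  have := h _ hs
  rw [apply_symm_apply] at this
  exact hy (ρ.injective this ▸ hs)

variable [Fintype α]

theorem val_apply_eq_card_filter_lt (ρ : α ≃ Fin n) (x : α) :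
    (ρ x : ℕ) = #{y | ρ y < ρ x} := by
  have : ({y | ρ y < ρ x} : Finset α) = (Iio (ρ x)).map ρ.symm.toEmbedding := by
    ext y; simp
  rw [this, card_map, Fin.card_Iio]

theorem apply_eq_of_lt_iff_lt (ρ ρ' : α ≃ Fin n) {x : α}
    (h : ∀ y, ρ y < ρ x ↔ ρ' y < ρ' x) : ρ x = ρ' x :=
  Fin.ext <| by
    rw [val_apply_eq_card_filter_lt, val_apply_eq_card_filter_lt, filter_congr fun y _ => h y]

theorem card_filter_eqOn [DecidableEq α] {β : Type*} [Fintype β] [DecidableEq β] (ρ₀ : α ≃ β)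
    (s : Finset α) : #{ρ : α ≃ β | ∀ x ∈ s, ρ x = ρ₀ x} = (#sᶜ).factorial := by
  rw [← Fintype.card_subtype]
  let e : (α ≃ β) ≃ Perm α := (Equiv.refl α).equivCongr ρ₀.symm
  rw [Fintype.card_congr (e.subtypeEquiv (p := fun ρ => ∀ x ∈ s, ρ x = ρ₀ x)
    (q := fun σ => ∀ x, ¬ x ∉ s → σ x = x) fun ρ => by simp [e, symm_apply_eq]),
    ← Fintype.card_congr (Perm.subtypeEquivSubtypePerm (· ∉ s)), Fintype.card_perm]
  simp [card_compl]

end Equiv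

section IsSplit

variable {β : Type*} [LinearOrder β] {f : α → β} {l₁ l₂ : List α} {a b x y : α}

/-- The cell of `(l₁, l₂)`, phrased without `C`: going down along `f` one meets `l₁`, `a`, the
elements off the spine `l₁ ++ a :: b :: l₂` in any order, `b`, and `l₂`. -/
def IsSplit (f : α → β) (l₁ : List α) (a b : α) (l₂ : List α) : Prop :=
  (l₁ ++ a :: b :: l₂).Pairwise (fun x y => f y < f x) ∧
    ∀ y ∉ l₁ ++ a :: b :: l₂, f b < f y ∧ f y < f a

instance [Fintype α] [DecidableEq α] : Decidable (IsSplit f l₁ a b l₂) := by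
  unfold IsSplit; infer_instance

theorem pairwise_append_cons_cons_comp_gt_iff :
    (l₁ ++ a :: b :: l₂).Pairwise (fun x y => f y < f x) ↔
      l₁.Pairwise (fun x y => f y < f x) ∧ l₂.Pairwise (fun x y => f y < f x) ∧
        (∀ x ∈ l₁, f a < f x) ∧ f b < f a ∧ ∀ y ∈ l₂, f y < f b := by
  simp only [List.pairwise_append, List.pairwise_cons, List.mem_cons, forall_eq_or_imp]
  constructor
  · rintro ⟨h₁, ⟨⟨hba, -⟩, hl₂, h₂⟩, hcross⟩
    exact ⟨h₁, h₂, fun x hx => (hcross x hx).1, hba, hl₂⟩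
  · rintro ⟨h₁, h₂, hl₁, hba, hl₂⟩
    refine ⟨h₁, ⟨⟨hba, fun y hy => (hl₂ y hy).trans hba⟩, hl₂, h₂⟩, fun x hx => ?_⟩
    have hax := hl₁ x hx
    exact ⟨hax, hba.trans hax, fun y hy => ((hl₂ y hy).trans hba).trans hax⟩

namespace IsSplit

theorem lt_iff_of_notMem (h : IsSplit f l₁ a b l₂) (hx : x ∈ l₁ ++ a :: b :: l₂)
    (hy : y ∉ l₁ ++ a :: b :: l₂) : f y < f x ↔ f b < f x := by
  obtain ⟨-, -, hl₁, hba, hl₂⟩ := pairwise_append_cons_cons_comp_gt_iff.mp h.1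
  obtain ⟨hby, hya⟩ := h.2 y hy
  simp only [List.mem_append, List.mem_cons] at hx
  rcases hx with hx | rfl | rfl | hx
  · exact iff_of_true (hya.trans (hl₁ x hx)) (hba.trans (hl₁ x hx))
  · exact iff_of_true hya hba
  · exact iff_of_false hby.asymm (lt_irrefl _)
  · exact iff_of_false ((hl₂ x hx).trans hby).asymm (hl₂ x hx).asymm

theorem eqOn [Fintype α] {n : ℕ} {ρ ρ' : α ≃ Fin n} (h : IsSplit ρ l₁ a b l₂)
    (h' : IsSplit ρ' l₁ a b l₂) : ∀ x ∈ l₁ ++ a :: b :: l₂, ρ x = ρ' x := fun x hx =>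
  Equiv.apply_eq_of_lt_iff_lt ρ ρ' fun y => by
    by_cases hy : y ∈ l₁ ++ a :: b :: l₂
    · exact h.1.lt_iff_lt_of_pairwise h'.1 hy hx
    · rw [h.lt_iff_of_notMem hx hy, h'.lt_iff_of_notMem hx hy]
      exact h.1.lt_iff_lt_of_pairwise h'.1 (by simp) hx

theorem of_eqOn {γ : Type*} [LinearOrder γ] {ρ ρ₀ : α ≃ γ} (h₀ : IsSplit ρ₀ l₁ a b l₂)
    (h : ∀ x ∈ l₁ ++ a :: b :: l₂, ρ x = ρ₀ x) : IsSplit ρ l₁ a b l₂ := by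
  refine ⟨h₀.1.imp_of_mem fun hx hy hxy => by rwa [h _ hx, h _ hy], fun y hy => ?_⟩
  have := h₀.2 _ (Equiv.symm_apply_notMem_of_eqOn (s := {x | x ∈ l₁ ++ a :: b :: l₂}) h hy)
  rwa [Equiv.apply_symm_apply, ← h b (by simp), ← h a (by simp)] at this

end IsSplit

theorem exists_isSplit [Fintype α] (hK : (l₁ ++ a :: b :: l₂).Nodup) :
    ∃ ρ : α ≃ Fin (Fintype.card α), IsSplit ρ l₁ a b l₂ := by
  classical
  set K := l₁ ++ a :: b :: l₂
  let M := (K.toFinsetᶜ).toList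
  have hM y : y ∈ M ↔ y ∉ K := by simp [M]
  have hL : (M ++ K).Perm (l₁ ++ a :: (M ++ b :: l₂)) :=
    (List.perm_append_comm_assoc l₁ M _).symm.trans (List.perm_middle.append_left l₁)
  have hnd : (M ++ K).Nodup :=
    List.nodup_append.mpr ⟨nodup_toList _, hK, fun y hy z hz hyz => (hM y).1 hy (hyz ▸ hz)⟩
  obtain ⟨ρ, hρ⟩ := (hL.nodup hnd).exists_equiv_fin_pairwise_gt fun x =>
    hL.mem_iff.mp (List.mem_append.mpr ((em (x ∈ K)).symm.imp_left (hM x).2))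
  refine ⟨ρ, hρ.sublist (((List.sublist_append_right M _).cons_cons a).append_left l₁),
    fun y hy => ?_⟩
  simp only [List.pairwise_append, List.pairwise_cons, List.mem_append, List.mem_cons] at hρ
  exact ⟨hρ.2.1.2.2.2 y ((hM y).2 hy) b (by simp), hρ.2.1.1 y (Or.inl ((hM y).2 hy))⟩

theorem card_filter_isSplit [Fintype α] [DecidableEq α] (hK : (l₁ ++ a :: b :: l₂).Nodup) :
    #{ρ : α ≃ Fin (Fintype.card α) | IsSplit ρ l₁ a b l₂} =
      (Fintype.card α - (l₁ ++ a :: b :: l₂).length).factorial := by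
  obtain ⟨ρ₀, h₀⟩ := exists_isSplit hK
  rw [filter_congr (q := fun ρ => ∀ x ∈ (l₁ ++ a :: b :: l₂).toFinset, ρ x = ρ₀ x) fun ρ _ => by
      simpa only [List.mem_toFinset] using ⟨fun h => h.eqOn h₀, fun h => h₀.of_eqOn h⟩,
    Equiv.card_filter_eqOn, card_compl, List.toFinset_card_of_nodup hK]

end IsSplit

section SStar

variable [Fintype α] [DecidableEq α] {C : Finset α} {a b : α} {l₁ l₂ : List α} {ρ : Ranking α}

theorem existsUnique_lists_of_mem_SStar (hb : b ∈ Cᶜ) (hab : a ≠ b) (hρ : ρ ∈ SStar C a b) :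
    ∃! p : List α × List α,
      (p.1 ++ p.2).Nodup ∧ (p.1 ++ p.2).toFinset = C ∧
      p.1.toFinset = C.filter (fun c => ρ a < ρ c) ∧
      p.2.toFinset = C.filter (fun c => ρ c < ρ b) ∧
      p.1.IsChain (fun x y => ρ y < ρ x) ∧ p.2.IsChain (fun x y => ρ y < ρ x) := by
  obtain ⟨-, hle, -, hsplit⟩ := mem_filter.mp hρ
  have hba : ρ b < ρ a := (hle b hb).lt_of_ne (ρ.injective.ne hab.symm)
  obtain ⟨l₁, hl₁, hs₁⟩ := exists_list_pairwise_comp_gt ρ.injective {c ∈ C | ρ a < ρ c}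
  obtain ⟨l₂, hl₂, hs₂⟩ := exists_list_pairwise_comp_gt ρ.injective {c ∈ C | ρ c < ρ b}
  have hmem₁ x : x ∈ l₁ ↔ x ∈ C ∧ ρ a < ρ x := List.mem_iff_of_toFinset_eq_filter hl₁
  have hmem₂ x : x ∈ l₂ ↔ x ∈ C ∧ ρ x < ρ b := List.mem_iff_of_toFinset_eq_filter hl₂
  refine ⟨(l₁, l₂), ⟨?_, ?_, hl₁, hl₂, hs₁.isChain, hs₂.isChain⟩, fun q hq => Prod.ext ?_ ?_⟩
  · refine List.nodup_append.mpr ⟨hs₁.nodup_of_comp_gt, hs₂.nodup_of_comp_gt, ?_⟩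
    rintro x hx y hy rfl
    exact ((hmem₂ x).1 hy).2.asymm (hba.trans ((hmem₁ x).1 hx).2)
  · ext c
    simp only [List.toFinset_append, mem_union, List.mem_toFinset, hmem₁, hmem₂]
    exact ⟨fun h => h.elim And.left And.left, fun hc => (hsplit c hc).imp (⟨hc, ·⟩) (⟨hc, ·⟩)⟩
  · exact List.eq_of_pairwise_comp_gt_of_toFinset_eq hq.2.2.2.2.1.pairwise_comp_gt hs₁
      (hq.2.2.1.trans hl₁.symm)
  · exact List.eq_of_pairwise_comp_gt_of_toFinset_eq hq.2.2.2.2.2.pairwise_comp_gt hs₂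
      (hq.2.2.2.1.trans hl₂.symm)

theorem isSplit_of_mem_SStar (hb : b ∈ Cᶜ) (hab : a ≠ b) (hρ : ρ ∈ SStar C a b)
    (h₁ : l₁.toFinset = C.filter (fun c => ρ a < ρ c))
    (h₂ : l₂.toFinset = C.filter (fun c => ρ c < ρ b))
    (hc₁ : l₁.IsChain (fun x y => ρ y < ρ x)) (hc₂ : l₂.IsChain (fun x y => ρ y < ρ x))
    (hmemC : ∀ c, c ∈ C ↔ c ∈ l₁ ∨ c ∈ l₂) : IsSplit ρ l₁ a b l₂ := by
  obtain ⟨-, hle, hge, -⟩ := mem_filter.mp hρ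
  have hba : ρ b < ρ a := (hle b hb).lt_of_ne (ρ.injective.ne hab.symm)
  refine ⟨pairwise_append_cons_cons_comp_gt_iff.mpr ⟨hc₁.pairwise_comp_gt, hc₂.pairwise_comp_gt,
    fun x hx => ((List.mem_iff_of_toFinset_eq_filter h₁).1 hx).2, hba,
    fun x hx => ((List.mem_iff_of_toFinset_eq_filter h₂).1 hx).2⟩, fun y hy => ?_⟩
  simp only [List.mem_append, List.mem_cons, not_or] at hy
  obtain ⟨hy₁, hya, hyb, hy₂⟩ := hy
  have hyC : y ∈ Cᶜ := mem_compl.mpr fun hyC => ((hmemC y).mp hyC).elim hy₁ hy₂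
  exact ⟨(hge y hyC).lt_of_ne (ρ.injective.ne (Ne.symm hyb)),
    (hle y hyC).lt_of_ne (ρ.injective.ne hya)⟩

theorem IsSplit.mem_SStar (h : IsSplit ρ l₁ a b l₂) (hmemC : ∀ c, c ∈ C ↔ c ∈ l₁ ∨ c ∈ l₂) :
    ρ ∈ SStar C a b ∧
      l₁.toFinset = C.filter (fun c => ρ a < ρ c) ∧ l₂.toFinset = C.filter (fun c => ρ c < ρ b) ∧
      l₁.IsChain (fun x y => ρ y < ρ x) ∧ l₂.IsChain (fun x y => ρ y < ρ x) := by
  obtain ⟨hp₁, hp₂, hl₁, hba, hl₂⟩ := pairwise_append_cons_cons_comp_gt_iff.mp h.1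
  have hout : ∀ c ∉ C, ρ b ≤ ρ c ∧ ρ c ≤ ρ a := fun c hc => by
    by_cases hcK : c ∈ l₁ ++ a :: b :: l₂
    · simp only [hmemC, not_or, List.mem_append, List.mem_cons] at hc hcK
      rcases hcK with h | rfl | rfl | h
      exacts [absurd h hc.1, ⟨hba.le, le_rfl⟩, ⟨le_rfl, hba.le⟩, absurd h hc.2]
    · exact (h.2 c hcK).imp le_of_lt le_of_lt
  refine ⟨mem_filter.mpr ⟨mem_univ _, fun c hc => (hout c (mem_compl.mp hc)).2,
    fun c hc => (hout c (mem_compl.mp hc)).1, fun c hc => ((hmemC c).mp hc).imp (hl₁ c) (hl₂ c)⟩,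
    ?_, ?_, hp₁.isChain, hp₂.isChain⟩
  · ext c
    simp only [List.mem_toFinset, mem_filter, hmemC]
    exact ⟨fun hc => ⟨Or.inl hc, hl₁ c hc⟩,
      fun ⟨hc, hac⟩ => hc.resolve_right fun hc => hac.asymm ((hl₂ c hc).trans hba)⟩
  · ext c
    simp only [List.mem_toFinset, mem_filter, hmemC]
    exact ⟨fun hc => ⟨Or.inr hc, hl₂ c hc⟩,
      fun ⟨hc, hcb⟩ => hc.resolve_left fun hc => hcb.asymm (hba.trans (hl₁ c hc))⟩

end SStar

theorem SStar_decomposition_general [Fintype α] [DecidableEq α]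
    (C : Finset α)
    (a : α) (ha : a ∈ Cᶜ) (b : α) (hb : b ∈ Cᶜ) (hab : a ≠ b) :
    (∀ ρ ∈ SStar C a b, ∃! p : List α × List α,
      (p.1 ++ p.2).Nodup ∧ (p.1 ++ p.2).toFinset = C ∧
      p.1.toFinset = C.filter (fun c => ρ a < ρ c) ∧
      p.2.toFinset = C.filter (fun c => ρ c < ρ b) ∧
      p.1.Chain' (fun x y => ρ y < ρ x) ∧ p.2.Chain' (fun x y => ρ y < ρ x)) ∧
    ∀ p : List α × List α, (p.1 ++ p.2).Nodup → (p.1 ++ p.2).toFinset = C →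
      ((SStar C a b).filter (fun ρ : Ranking α =>
          p.1.toFinset = C.filter (fun c => ρ a < ρ c) ∧
          p.2.toFinset = C.filter (fun c => ρ c < ρ b) ∧
          p.1.IsChain (fun x y => ρ y < ρ x) ∧ p.2.IsChain (fun x y => ρ y < ρ x))).card
        = (Cᶜ.card - 2).factorial := by
  refine ⟨fun ρ hρ => existsUnique_lists_of_mem_SStar hb hab hρ, fun p hnd htf => ?_⟩
  have hmemC c : c ∈ C ↔ c ∈ p.1 ∨ c ∈ p.2 := by simp [← htf]
  have hout : ∀ c ∈ Cᶜ, c ∉ p.1 ∧ c ∉ p.2 := fun c hc => by simpa [hmemC] using hc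
  have hK : (p.1 ++ a :: b :: p.2).Nodup := by
    simp [List.nodup_middle, hnd, hab, hout a ha, hout b hb]
  have hC : #C = (p.1 ++ p.2).length := htf ▸ List.toFinset_card_of_nodup hnd
  calc _ = #{ρ : Ranking α | IsSplit ρ p.1 a b p.2} := by
        congr 1
        ext ρ
        simp only [mem_filter, mem_univ, true_and]
        exact ⟨fun ⟨hρ, h₁, h₂, hc₁, hc₂⟩ => isSplit_of_mem_SStar hb hab hρ h₁ h₂ hc₁ hc₂ hmemC,
          fun h => h.mem_SStar hmemC⟩
    _ = (Fintype.card α - (p.1 ++ a :: b :: p.2).length).factorial := card_filter_isSplit hK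
    _ = (#Cᶜ - 2).factorial := by
        rw [← card_add_card_compl C, hC]
        simp only [List.length_append, List.length_cons]
        congr 1
        omega

/-- Lemma (splitting decomposition): `S*(a, C, b)` decomposes as a disjoint union indexed by
ordered pairs `(s₁, s₂)` of disjoint (duplicate-free) lists whose underlying sets partition `C`:
each ranking `ρ ∈ S*(a, C, b)` determines exactly one such pair — `s₁` lists, in ρ-decreasing
order, the elements of `C` above `a`, and `s₂` lists, in ρ-decreasing order, those below `b` —
and each cell of the decomposition has exactly `(|A∖C| − 2)!` rankings. -/
theorem SStar_decomposition [Fintype α] [DecidableEq α]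
    (C : Finset α) (hCc : 2 ≤ Cᶜ.card)
    (a : α) (ha : a ∈ Cᶜ) (b : α) (hb : b ∈ Cᶜ) (hab : a ≠ b) :
    (∀ ρ ∈ SStar C a b, ∃! p : List α × List α,
      (p.1 ++ p.2).Nodup ∧ (p.1 ++ p.2).toFinset = C ∧
      p.1.toFinset = C.filter (fun c => ρ a < ρ c) ∧
      p.2.toFinset = C.filter (fun c => ρ c < ρ b) ∧
      p.1.Chain' (fun x y => ρ y < ρ x) ∧ p.2.Chain' (fun x y => ρ y < ρ x)) ∧
    ∀ p : List α × List α, (p.1 ++ p.2).Nodup → (p.1 ++ p.2).toFinset = C →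
      ((SStar C a b).filter (fun ρ : Ranking α =>
          p.1.toFinset = C.filter (fun c => ρ a < ρ c) ∧
          p.2.toFinset = C.filter (fun c => ρ c < ρ b) ∧
          p.1.IsChain (fun x y => ρ y < ρ x) ∧ p.2.IsChain (fun x y => ρ y < ρ x))).card
        = (Cᶜ.card - 2).factorial :=
  SStar_decomposition_general C a ha b hb hab
end

section
/- Let A be a finite set with |A| ≥ 2 and let i, j ∈ A be distinct. For every ranking ρ ∈ Π_A there is exactly one subset B ⊆ A\{i,j}, namely the set of elements of A\{i,j} that do not lie strictly between i and j under ρ, such that either ρ ∈ S*(i, B, j) (when i is above j under ρ) or ρ ∈ S*(j, B, i) (when j is above i under ρ), and these two cases are mutually exclusive. -/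
open Finset MeasureTheory

variable {α : Type*}

/-- The set of elements of `A∖{i,j}` that do NOT lie strictly between `i` and `j` under `ρ`. -/
def outsideBetween [Fintype α] [DecidableEq α] (ρ : Ranking α) (i j : α) : Finset α :=
  (({i, j} : Finset α)ᶜ).filter fun c =>
    ¬(min (ρ i) (ρ j) < ρ c ∧ ρ c < max (ρ i) (ρ j))

section Aux
variable [Fintype α] [DecidableEq α]

private lemma outsideBetween_comm (ρ : Ranking α) (i j : α) :
    outsideBetween ρ j i = outsideBetween ρ i j := by
  simp [outsideBetween, Finset.pair_comm, min_comm (ρ j) (ρ i), max_comm (ρ j) (ρ i)]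

private lemma mem_SStar_of_lt (i j : α) (hij : i ≠ j) (ρ : Ranking α) (hji : ρ j < ρ i) :
    ρ ∈ SStar (outsideBetween ρ i j) i j := by
  have hinj : ∀ {a b : α}, ρ a = ρ b → a = b := fun h => ρ.injective h
  have hmin : min (ρ i) (ρ j) = ρ j := min_eq_right hji.le
  have hmax : max (ρ i) (ρ j) = ρ i := max_eq_left hji.le
  simp only [SStar, mem_filter, mem_univ, true_and]
  refine ⟨?_, ?_, ?_⟩
  · intro c hc
    rw [Finset.mem_compl, outsideBetween, Finset.mem_filter, Finset.mem_compl] at hc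
    push_neg at hc
    by_cases hci : c = i
    · exact le_of_eq (by rw [hci])
    by_cases hcj : c = j
    · exact le_of_lt (by rw [hcj]; exact hji)
    · have := hc (by simp [hci, hcj])
      rw [hmin, hmax] at this
      exact this.2.le
  · intro c hc
    rw [Finset.mem_compl, outsideBetween, Finset.mem_filter, Finset.mem_compl] at hc
    push_neg at hc
    by_cases hci : c = i
    · exact le_of_lt (by rw [hci]; exact hji)
    by_cases hcj : c = j
    · exact le_of_eq (by rw [hcj])
    · have := hc (by simp [hci, hcj])
      rw [hmin, hmax] at this
      exact this.1.le
  · intro c hc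
    rw [outsideBetween, Finset.mem_filter, Finset.mem_compl] at hc
    rw [hmin, hmax] at hc
    obtain ⟨hc1, hc2⟩ := hc
    have hci : c ≠ i := fun h => by simp [h] at hc1
    have hcj : c ≠ j := fun h => by simp [h] at hc1
    rcases not_and_or.mp hc2 with h | h
    · right; exact lt_of_le_of_ne (not_lt.mp h) (fun e => hcj (hinj e))
    · left; exact lt_of_le_of_ne (not_lt.mp h) (fun e => hci (hinj e.symm))

private lemma lt_of_mem_SStar (B : Finset α) (i j : α) (hij : i ≠ j) (hB : B ⊆ ({i, j} : Finset α)ᶜ)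
    (ρ : Ranking α) (h : ρ ∈ SStar B i j) : ρ j < ρ i ∧ B = outsideBetween ρ i j := by
  have hinj : ∀ {a b : α}, ρ a = ρ b → a = b := fun h => ρ.injective h
  simp only [SStar, mem_filter, mem_univ, true_and] at h
  obtain ⟨h1, h2, h3⟩ := h
  have hiB : i ∉ B := fun hi => by simpa using hB hi
  have hjB : j ∉ B := fun hj => by simpa using hB hj
  have hji : ρ j < ρ i := by
    rcases lt_or_eq_of_le (h2 i (Finset.mem_compl.mpr hiB)) with h | h
    · exact h
    · exact absurd (hinj h.symm) hij
  have hmin : min (ρ i) (ρ j) = ρ j := min_eq_right hji.le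
  have hmax : max (ρ i) (ρ j) = ρ i := max_eq_left hji.le
  refine ⟨hji, ?_⟩
  ext c
  rw [outsideBetween, Finset.mem_filter, hmin, hmax]
  constructor
  · intro hc
    refine ⟨hB hc, ?_⟩
    rcases h3 c hc with h | h
    · exact fun hh => absurd hh.2 (not_lt.mpr h.le)
    · exact fun hh => absurd hh.1 (not_lt.mpr h.le)
  · rintro ⟨hc1, hc2⟩
    rw [Finset.mem_compl] at hc1
    simp only [Finset.mem_insert, Finset.mem_singleton, not_or] at hc1
    by_contra hcB
    have hcc : c ∈ Bᶜ := Finset.mem_compl.mpr hcB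
    exact hc2 ⟨lt_of_le_of_ne (h2 c hcc) (fun e => hc1.2 (hinj e.symm)),
      lt_of_le_of_ne (h1 c hcc) (fun e => hc1.1 (hinj e))⟩

end Aux

/-- Lemma: for distinct `i, j` and any ranking `ρ`, the subset `B₀ ⊆ A∖{i,j}` of elements not
strictly between `i` and `j` is the unique `B ⊆ A∖{i,j}` with `ρ ∈ S*(i,B,j)` or
`ρ ∈ S*(j,B,i)`; which of the two happens is decided (exclusively) by whether `i` is above `j`. -/
theorem mem_SStar_outsideBetween_unique [Fintype α] [DecidableEq α]
    (hA : 2 ≤ Fintype.card α) (i j : α) (hij : i ≠ j) (ρ : Ranking α) :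
    ((ρ j < ρ i → ρ ∈ SStar (outsideBetween ρ i j) i j ∧ ρ ∉ SStar (outsideBetween ρ i j) j i) ∧
     (ρ i < ρ j → ρ ∈ SStar (outsideBetween ρ i j) j i ∧ ρ ∉ SStar (outsideBetween ρ i j) i j)) ∧
    ∀ B : Finset α, B ⊆ ({i, j} : Finset α)ᶜ →
      (ρ ∈ SStar B i j ∨ ρ ∈ SStar B j i) → B = outsideBetween ρ i j := by
  have hBsub : outsideBetween ρ i j ⊆ ({i, j} : Finset α)ᶜ := Finset.filter_subset _ _
  have hBsub' : outsideBetween ρ i j ⊆ ({j, i} : Finset α)ᶜ := by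
    rwa [Finset.pair_comm]
  refine ⟨⟨fun hji => ⟨mem_SStar_of_lt i j hij ρ hji, fun h => ?_⟩,
    fun hij' => ⟨?_, fun h => ?_⟩⟩, ?_⟩
  · exact absurd (lt_of_mem_SStar _ j i hij.symm hBsub' ρ h).1 (not_lt.mpr hji.le)
  · rw [← outsideBetween_comm]; exact mem_SStar_of_lt j i hij.symm ρ hij'
  · exact absurd (lt_of_mem_SStar _ i j hij hBsub ρ h).1 (not_lt.mpr hij'.le)
  · rintro B hB (h | h)
    · exact (lt_of_mem_SStar B i j hij hB ρ h).2
    · rw [← outsideBetween_comm]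
      exact (lt_of_mem_SStar B j i hij.symm (by rwa [Finset.pair_comm]) ρ h).2
end
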